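/- arXiv:1404.5875 — 3 statements merged into one kernel-verified Lean document; each statement's English description precedes it below -/
import Mathlib

section
/- Let S be an ordered groupoid (a set with a multiplication and a partial order ≤ such that a ≤ b implies a·c ≤ b·c and c·a ≤ c·b for all c) and let f be a fuzzy subset of S which is fuzzy semiprime, i.e., f(x) ≥ f(x²) for every x ∈ S. Then for every fuzzy subset g of S such that g∘g ⪯ f, we have g ⪯ f. -/
/-- The composition `f ∘ g` of two fuzzy subsets (maps into `[0,1] ⊆ ℝ`) of an
ordered groupoid `S`: `(f ∘ g)(a) = sup { min (f x) (g y) | a ≤ x * y }`,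
and `0` when no such pair exists (which agrees with `Real.sSup_empty`). -/
noncomputable def fuzzyComp {S : Type*} [Mul S] [PartialOrder S] (f g : S → ℝ) : S → ℝ :=
  fun a => sSup {t : ℝ | ∃ x y : S, a ≤ x * y ∧ t = min (f x) (g y)}

theorem min_le_fuzzyComp {S : Type*} [Mul S] [PartialOrder S] {f : S → ℝ} (g : S → ℝ)
    (hf : BddAbove (Set.range f)) {a x y : S} (h : a ≤ x * y) :
    min (f x) (g y) ≤ fuzzyComp f g a := by
  obtain ⟨M, hM⟩ := hf
  refine le_csSup ⟨M, ?_⟩ ⟨x, y, h, rfl⟩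
  rintro _ ⟨u, v, -, rfl⟩
  exact (min_le_left _ _).trans (hM ⟨u, rfl⟩)

theorem stmt2_general {S : Type*} [Mul S] [PartialOrder S]
    (f : S → ℝ)
    (hsp : ∀ x : S, f (x * x) ≤ f x) :
    ∀ g : S → ℝ, (∀ x, g x ∈ Set.Icc (0 : ℝ) 1) →
      (∀ a : S, fuzzyComp g g a ≤ f a) → ∀ x : S, g x ≤ f x := by
  intro g hg hgg x
  have hbdd : BddAbove (Set.range g) := ⟨1, by rintro _ ⟨y, rfl⟩; exact (hg y).2⟩
  calc g x = min (g x) (g x) := (min_self _).symm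
    _ ≤ fuzzyComp g g (x * x) := min_le_fuzzyComp g hbdd le_rfl
    _ ≤ f (x * x) := hgg _
    _ ≤ f x := hsp x

/-- Theorem 4, (1) ⇒ (2): if `f` is fuzzy semiprime (`f(x²) ≤ f(x)` for all `x`),
then for every fuzzy subset `g` with `g ∘ g ⪯ f` we have `g ⪯ f`. -/
theorem stmt2 {S : Type*} [Mul S] [PartialOrder S]
    [CovariantClass S S (· * ·) (· ≤ ·)]
    [CovariantClass S S (Function.swap (· * ·)) (· ≤ ·)]
    (f : S → ℝ) (hf : ∀ x, f x ∈ Set.Icc (0 : ℝ) 1)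
    (hsp : ∀ x : S, f (x * x) ≤ f x) :
    ∀ g : S → ℝ, (∀ x, g x ∈ Set.Icc (0 : ℝ) 1) →
      (∀ a : S, fuzzyComp g g a ≤ f a) → ∀ x : S, g x ≤ f x :=
  stmt2_general f hsp
end

section
/- Let S be an ordered groupoid (a set with a multiplication and a partial order ≤ such that a ≤ b implies a·c ≤ b·c and c·a ≤ c·b for all c) and let f be a fuzzy subset of S such that: (a) for all a, x, y ∈ S, a ≤ x·y implies min{f(x²), f(y²)} ≤ f(a); and (b) for every fuzzy subset g of S with g∘g ⪯ f, we have g ⪯ f. Then f is fuzzy semiprime, i.e., f(x) ≥ f(x²) for every x ∈ S. -/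
theorem fuzzyComp_le {S : Type*} [Mul S] [PartialOrder S] {g h : S → ℝ} {a : S} {c : ℝ}
    (hc : 0 ≤ c) (H : ∀ x y : S, a ≤ x * y → min (g x) (h y) ≤ c) : fuzzyComp g h a ≤ c :=
  Real.sSup_le (by rintro t ⟨x, y, hxy, rfl⟩; exact H x y hxy) hc

theorem stmt4_general {S : Type*} [Mul S] [PartialOrder S]
    (f : S → ℝ) (hf : ∀ x, f x ∈ Set.Icc (0 : ℝ) 1)
    (ha : ∀ a x y : S, a ≤ x * y → min (f (x * x)) (f (y * y)) ≤ f a)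
    (hb : ∀ g : S → ℝ, (∀ x, g x ∈ Set.Icc (0 : ℝ) 1) →
      (∀ a : S, fuzzyComp g g a ≤ f a) → ∀ x : S, g x ≤ f x) :
    ∀ x : S, f (x * x) ≤ f x :=
  hb (fun z => f (z * z)) (fun z => hf (z * z)) fun a => fuzzyComp_le (hf a).1 (ha a)

/-- Theorem 5: let `f` be a fuzzy subset of an ordered groupoid `S` such that
(a) `a ≤ x * y` implies `min (f (x²)) (f (y²)) ≤ f a`, and
(b) every fuzzy subset `g` with `g ∘ g ⪯ f` satisfies `g ⪯ f`.
Then `f` is fuzzy semiprime. -/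
theorem stmt4 {S : Type*} [Mul S] [PartialOrder S]
    [CovariantClass S S (· * ·) (· ≤ ·)]
    [CovariantClass S S (Function.swap (· * ·)) (· ≤ ·)]
    (f : S → ℝ) (hf : ∀ x, f x ∈ Set.Icc (0 : ℝ) 1)
    (ha : ∀ a x y : S, a ≤ x * y → min (f (x * x)) (f (y * y)) ≤ f a)
    (hb : ∀ g : S → ℝ, (∀ x, g x ∈ Set.Icc (0 : ℝ) 1) →
      (∀ a : S, fuzzyComp g g a ≤ f a) → ∀ x : S, g x ≤ f x) :
    ∀ x : S, f (x * x) ≤ f x :=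
  stmt4_general f hf ha hb
end

section
/- Let S be an ordered semigroup (a set with an associative multiplication and a partial order ≤ such that a ≤ b implies a·c ≤ b·c and c·a ≤ c·b for all c). Then the multiplication ∘ of fuzzy subsets of S is associative: (f∘g)∘h = f∘(g∘h) for all fuzzy subsets f, g, h of S. -/
section Groupoid

variable {S : Type*} [Mul S] [PartialOrder S]

lemma fuzzyComp_nonneg {f g : S → ℝ} (hf : ∀ x, 0 ≤ f x) (hg : ∀ x, 0 ≤ g x) (a : S) :
    0 ≤ fuzzyComp f g a :=
  Real.sSup_nonneg (by rintro _ ⟨x, y, _, rfl⟩; exact le_min (hf x) (hg y))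

lemma fuzzyComp_le_one {f : S → ℝ} (hf : ∀ x, f x ≤ 1) (g : S → ℝ) (a : S) :
    fuzzyComp f g a ≤ 1 :=
  Real.sSup_le (by rintro _ ⟨x, y, _, rfl⟩; exact (min_le_left _ _).trans (hf x)) zero_le_one

-- An empty supremum is `0`, so the equivalence fails for `c < 0`.
lemma fuzzyComp_le_iff {f : S → ℝ} (hf : ∀ x, f x ≤ 1) {g : S → ℝ} {a : S} {c : ℝ}
    (hc : 0 ≤ c) : fuzzyComp f g a ≤ c ↔ ∀ x y, a ≤ x * y → min (f x) (g y) ≤ c := by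
  have hbdd : BddAbove {t : ℝ | ∃ x y : S, a ≤ x * y ∧ t = min (f x) (g y)} :=
    ⟨1, by rintro _ ⟨x, y, _, rfl⟩; exact (min_le_left _ _).trans (hf x)⟩
  constructor
  · intro hle x y hxy
    exact (le_csSup hbdd ⟨x, y, hxy, rfl⟩).trans hle
  · intro hle
    exact Real.sSup_le (by rintro _ ⟨x, y, hxy, rfl⟩; exact hle x y hxy) hc

lemma min_fuzzyComp_le_iff {f : S → ℝ} (hf : ∀ x, f x ≤ 1) {g : S → ℝ} {u : S} {c : ℝ}
    (hc : 0 ≤ c) (d : ℝ) :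
    min (fuzzyComp f g u) d ≤ c ↔ ∀ x y, u ≤ x * y → min (min (f x) (g y)) d ≤ c := by
  rcases le_or_gt d c with hdc | hcd
  · simp only [min_le_of_right_le hdc, implies_true]
  · simp only [min_le_iff, not_le.mpr hcd, or_false, fuzzyComp_le_iff hf hc]

end Groupoid

section OrderedSemigroup

variable {S : Type*} [Semigroup S] [PartialOrder S] {f g h : S → ℝ} {a : S} {c : ℝ}

lemma fuzzyComp_fuzzyComp_left_le_iff [MulRightMono S] (hf : ∀ x, f x ≤ 1) (hc : 0 ≤ c) :
    fuzzyComp (fuzzyComp f g) h a ≤ c ↔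
      ∀ x y z, a ≤ x * y * z → min (f x) (min (g y) (h z)) ≤ c := by
  simp only [fuzzyComp_le_iff (fuzzyComp_le_one hf g) hc, min_fuzzyComp_le_iff hf hc,
    ← min_assoc]
  constructor
  · intro hle x y z hxyz
    exact hle (x * y) z hxyz x y le_rfl
  · intro hle u z hauz x y huxy
    exact hle x y z (hauz.trans (mul_le_mul_left huxy z))

lemma fuzzyComp_fuzzyComp_right_le_iff [MulLeftMono S] (hf : ∀ x, f x ≤ 1)
    (hg : ∀ x, g x ≤ 1) (hc : 0 ≤ c) :
    fuzzyComp f (fuzzyComp g h) a ≤ c ↔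
      ∀ x y z, a ≤ x * y * z → min (f x) (min (g y) (h z)) ≤ c := by
  simp only [fuzzyComp_le_iff hf hc, min_comm (f _), min_fuzzyComp_le_iff hg hc]
  constructor
  · intro hle x y z hxyz
    exact hle x (y * z) (mul_assoc x y z ▸ hxyz) y z le_rfl
  · intro hle x u haxu y z huyz
    exact hle x y z (mul_assoc x y z ▸ haxu.trans (mul_le_mul_right huyz x))

end OrderedSemigroup

/-- In an ordered semigroup `S` (associative multiplication compatible with the
partial order), the composition of fuzzy subsets is associative:
`(f ∘ g) ∘ h = f ∘ (g ∘ h)`. -/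
theorem stmt8 {S : Type*} [Semigroup S] [PartialOrder S]
    [CovariantClass S S (· * ·) (· ≤ ·)]
    [CovariantClass S S (Function.swap (· * ·)) (· ≤ ·)]
    (f g h : S → ℝ) (hf : ∀ x, f x ∈ Set.Icc (0 : ℝ) 1)
    (hg : ∀ x, g x ∈ Set.Icc (0 : ℝ) 1) (hh : ∀ x, h x ∈ Set.Icc (0 : ℝ) 1) :
    fuzzyComp (fuzzyComp f g) h = fuzzyComp f (fuzzyComp g h) := by
  funext a
  have hf0 x := (hf x).1
  have hg0 x := (hg x).1
  have hh0 x := (hh x).1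
  have hf1 x := (hf x).2
  have hg1 x := (hg x).2
  have hleft : 0 ≤ fuzzyComp (fuzzyComp f g) h a :=
    fuzzyComp_nonneg (fuzzyComp_nonneg hf0 hg0) hh0 a
  have hright : 0 ≤ fuzzyComp f (fuzzyComp g h) a :=
    fuzzyComp_nonneg hf0 (fuzzyComp_nonneg hg0 hh0) a
  apply le_antisymm
  · rw [fuzzyComp_fuzzyComp_left_le_iff hf1 hright,
      ← fuzzyComp_fuzzyComp_right_le_iff hf1 hg1 hright]
  · rw [fuzzyComp_fuzzyComp_right_le_iff hf1 hg1 hleft,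
      ← fuzzyComp_fuzzyComp_left_le_iff hf1 hleft]
end
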